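/- Let |ψ⟩ = (1/√3)(|0000⟩+|1100⟩+|1111⟩) on qubits R,A,S,B, |φ⟩ = |ok⟩_{RA}⊗|ok⟩_{SB} with |ok⟩=(|00⟩−|11⟩)/√2, and for b∈{0,1} let π_b^B = 1_{RA} ⊗ |bb⟩⟨bb|_{SB}. Define P(b) := |⟨φ| π_b^B |ψ⟩|² / Σ_{b'∈{0,1}} |⟨φ| π_{b'}^B |ψ⟩|². Then the denominator equals 1/12 and P(0) = 0, P(1) = 1. -/

import Mathlib

open BigOperators

/-- Two-qubit basis labels. -/
abbrev Q2 := Fin 2 × Fin 2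
/-- Four-qubit basis labels, grouped as (R,A) × (S,B). -/
abbrev Q4 := Q2 × Q2

/-- `1/√3`. -/
noncomputable def c3 : ℂ := ((Real.sqrt 3 : ℝ) : ℂ)⁻¹
/-- `1/√2`. -/
noncomputable def c2 : ℂ := ((Real.sqrt 2 : ℝ) : ℂ)⁻¹

/-- The FR state `|ψ⟩ = (1/√3)(|0000⟩ + |1100⟩ + |1111⟩)` on qubits R,A,S,B. -/
noncomputable def ψFR : Q4 → ℂ := fun p =>
  if p = (((0, 0) : Q2), ((0, 0) : Q2)) then c3
  else if p = (((1, 1) : Q2), ((0, 0) : Q2)) then c3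
  else if p = (((1, 1) : Q2), ((1, 1) : Q2)) then c3
  else 0

/-- `|ok⟩ = (1/√2)(|00⟩ − |11⟩)`. -/
noncomputable def okv : Q2 → ℂ := fun p =>
  if p = ((0, 0) : Q2) then c2 else if p = ((1, 1) : Q2) then -c2 else 0

/-- Two-qubit computational basis vector. -/
def ketv (q : Q2) : Q2 → ℂ := fun p => if p = q then 1 else 0

/-- Tensor product of two two-qubit vectors. -/
noncomputable def tens (u v : Q2 → ℂ) : Q4 → ℂ := fun p => u p.1 * v p.2

/-- Inner product `⟨w|v⟩ = ∑ p, conj (w p) * v p`. -/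
noncomputable def ip (w v : Q4 → ℂ) : ℂ := ∑ p : Q4, star (w p) * v p

/-- Projector onto Bob's outcome `b`: `π_b^B = 1_{RA} ⊗ |bb⟩⟨bb|`, applied to a vector. -/
noncomputable def projB (b : Fin 2) (v : Q4 → ℂ) : Q4 → ℂ := fun p =>
  if p.2 = ((b, b) : Q2) then v p else 0

lemma conj_c2 : (starRingEnd ℂ) c2 = c2 := by
  rw [c2, ← Complex.ofReal_inv, Complex.conj_ofReal]

lemma c2_mul_self : c2 * c2 = 1 / 2 := by
  rw [c2, ← mul_inv, ← Complex.ofReal_mul, Real.mul_self_sqrt zero_le_two]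
  norm_num

lemma norm_c3_sq : ‖c3‖ ^ 2 = 1 / 3 := by
  rw [c3, norm_inv, Complex.norm_real, Real.norm_of_nonneg (Real.sqrt_nonneg 3), inv_pow,
    Real.sq_sqrt zero_le_three, one_div]

lemma ip_tens_projB (u v : Q2 → ℂ) (b : Fin 2) (w : Q4 → ℂ) :
    ip (tens u v) (projB b w) = star (v (b, b)) * ∑ p : Q2, star (u p) * w (p, (b, b)) := by
  rw [ip, Fintype.sum_prod_type, Finset.mul_sum]
  refine Finset.sum_congr rfl fun p _ => ?_
  simp only [tens, projB, star_mul, mul_ite, mul_zero, Finset.sum_ite_eq', Finset.mem_univ,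
    if_true]
  ring

/- Given `SB = 00`, the `RA` part of `ψFR` is the symmetric `|00⟩ + |11⟩`, which the
antisymmetric `|ok⟩` annihilates. -/
lemma sum_okv_ψFR_zero : ∑ p : Q2, star (okv p) * ψFR (p, (0, 0)) = 0 := by
  simp [Fintype.sum_prod_type, Fin.sum_univ_two, okv, ψFR]

lemma sum_okv_ψFR_one : ∑ p : Q2, star (okv p) * ψFR (p, (1, 1)) = -(c2 * c3) := by
  simp [okv, ψFR, conj_c2]

lemma ip_okv_projB_zero : ip (tens okv okv) (projB 0 ψFR) = 0 := by
  rw [ip_tens_projB, sum_okv_ψFR_zero, mul_zero]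

lemma ip_okv_projB_one : ip (tens okv okv) (projB 1 ψFR) = c3 / 2 := by
  have hok : okv (1, 1) = -c2 := by simp [okv]
  rw [ip_tens_projB, sum_okv_ψFR_one, hok, star_neg, Complex.star_def, conj_c2]
  linear_combination c3 * c2_mul_self

lemma norm_ip_okv_projB_one_sq : ‖ip (tens okv okv) (projB 1 ψFR)‖ ^ 2 = 1 / 12 := by
  rw [ip_okv_projB_one, norm_div, div_pow, norm_c3_sq]
  norm_num

/-- under settings (x₁,x₂)=(0,1), the post-selection success
probability is `1/12`, and `P(b=0)=0`, `P(b=1)=1`. -/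
theorem fr_prediction_setting_01 :
    (∑ b' : Fin 2, ‖ip (tens okv okv) (projB b' ψFR)‖ ^ 2) = 1 / 12 ∧
    ‖ip (tens okv okv) (projB 0 ψFR)‖ ^ 2 /
      (∑ b' : Fin 2, ‖ip (tens okv okv) (projB b' ψFR)‖ ^ 2) = 0 ∧
    ‖ip (tens okv okv) (projB 1 ψFR)‖ ^ 2 /
      (∑ b' : Fin 2, ‖ip (tens okv okv) (projB b' ψFR)‖ ^ 2) = 1 := by
  have hsum : (∑ b' : Fin 2, ‖ip (tens okv okv) (projB b' ψFR)‖ ^ 2) = 1 / 12 := by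
    rw [Fin.sum_univ_two, ip_okv_projB_zero, norm_ip_okv_projB_one_sq, norm_zero]
    norm_num
  refine ⟨hsum, ?_, ?_⟩
  · rw [ip_okv_projB_zero, norm_zero]
    simp
  · rw [hsum, norm_ip_okv_projB_one_sq]
    norm_num
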